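/- arXiv:1606.05732 — 3 statements merged into one kernel-verified Lean document; each statement's English description precedes it below -/
import Mathlib

section
/- Let Z be a real-valued random variable and E an event with Pr[E] ≥ 1/2. Let ε = E[(Z − 1)^2]. Then |E[Z] − E[Z | E]| ≤ 2(1 + E[Z])·Pr[E^c] + 2·√(ε·Pr[E^c]). -/
/-!
Centre `Z` at its mean `m` and put `a = ∫_E (Z - m)`. The centred variable integrates to zero,
so its integral over `Eᶜ` is `-a`, and Cauchy–Schwarz on `E` and on `Eᶜ` gives
`a² ≤ Pr[E] Pr[Eᶜ] Var Z`. Since `E[Z] - E[Z | E] = -a / Pr[E]` and `Pr[E] ≥ 1/2`, the deviation is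
at most `√(2 Var Z Pr[Eᶜ])`. Finally `E[(Z - 1)²] = Var Z + (m - 1)²`, and the extra `(m - 1)²`
under the square root pays for the term `2 (1 + m) Pr[Eᶜ]`, which may be negative.
-/

open MeasureTheory ProbabilityTheory

section
variable {Ω : Type*} [MeasurableSpace Ω] {μ : Measure Ω}

lemma sq_integral_le_measureReal_univ_mul_integral_sq [IsFiniteMeasure μ] {f : Ω → ℝ}
    (hf : Integrable f μ) (hf2 : Integrable (fun ω ↦ f ω ^ 2) μ) :
    (∫ ω, f ω ∂μ) ^ 2 ≤ μ.real Set.univ * ∫ ω, f ω ^ 2 ∂μ := by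
  rcases eq_zero_or_neZero μ with rfl | _
  · simp
  have hμ : μ.real Set.univ ≠ 0 := measureReal_univ_ne_zero
  have hJensen := (even_two.convexOn_pow (𝕜 := ℝ)).map_average_le
    (continuous_pow 2).continuousOn isClosed_univ (ae_of_all _ fun _ ↦ Set.mem_univ _) hf hf2
  simp only [average_eq, smul_eq_mul, mul_pow] at hJensen
  calc (∫ ω, f ω ∂μ) ^ 2
      = μ.real Set.univ ^ 2 * ((μ.real Set.univ)⁻¹ ^ 2 * (∫ ω, f ω ∂μ) ^ 2) := by field_simp
    _ ≤ μ.real Set.univ ^ 2 * ((μ.real Set.univ)⁻¹ * ∫ ω, f ω ^ 2 ∂μ) := by gcongr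
    _ = μ.real Set.univ * ∫ ω, f ω ^ 2 ∂μ := by field_simp

lemma sq_setIntegral_le_of_integral_eq_zero [IsProbabilityMeasure μ] {W : Ω → ℝ} {E : Set Ω}
    (hE : MeasurableSet E) (hW : Integrable W μ) (hW2 : Integrable (fun ω ↦ W ω ^ 2) μ)
    (hW0 : ∫ ω, W ω ∂μ = 0) :
    (∫ ω in E, W ω ∂μ) ^ 2 ≤ μ.real E * μ.real Eᶜ * ∫ ω, W ω ^ 2 ∂μ := by
  have hin := sq_integral_le_measureReal_univ_mul_integral_sq (μ := μ.restrict E)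
    hW.restrict hW2.restrict
  have hout := sq_integral_le_measureReal_univ_mul_integral_sq (μ := μ.restrict Eᶜ)
    hW.restrict hW2.restrict
  rw [measureReal_restrict_apply_univ] at hin hout
  have hcompl : ∫ ω in Eᶜ, W ω ∂μ = -∫ ω in E, W ω ∂μ := by
    linarith [integral_add_compl hE hW]
  rw [hcompl, neg_sq] at hout
  calc (∫ ω in E, W ω ∂μ) ^ 2
      = μ.real Eᶜ * (∫ ω in E, W ω ∂μ) ^ 2 + μ.real E * (∫ ω in E, W ω ∂μ) ^ 2 := by
        rw [← add_mul, add_comm, probReal_add_probReal_compl hE, one_mul]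
    _ ≤ μ.real Eᶜ * (μ.real E * ∫ ω in E, W ω ^ 2 ∂μ)
        + μ.real E * (μ.real Eᶜ * ∫ ω in Eᶜ, W ω ^ 2 ∂μ) := by gcongr
    _ = μ.real E * μ.real Eᶜ * ∫ ω, W ω ^ 2 ∂μ := by
        rw [← integral_add_compl hE hW2]
        ring

lemma integral_sub_sq_eq_variance_add_sq [IsProbabilityMeasure μ] {X : Ω → ℝ} (hX : MemLp X 2 μ)
    (c : ℝ) : ∫ ω, (X ω - c) ^ 2 ∂μ = Var[X; μ] + (μ[X] - c) ^ 2 := by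
  have hXc : MemLp (fun ω ↦ X ω - c) 2 μ := hX.sub (memLp_const c)
  rw [← variance_sub_const hX.aestronglyMeasurable c, variance_eq_sub hXc,
    integral_sub (hX.integrable one_le_two) (integrable_const c)]
  simp

end

lemma abs_le_conditioning_bound_of_sq_le {p q D V m : ℝ} (hpq : p + q = 1) (hp : 1 / 2 ≤ p)
    (hq : 0 ≤ q) (hV : 0 ≤ V) (hD : (p * D) ^ 2 ≤ p * q * V) :
    |D| ≤ 2 * (1 + m) * q + 2 * Real.sqrt ((V + (m - 1) ^ 2) * q) := by
  have hpD : p * D ^ 2 ≤ q * V := le_of_mul_le_mul_left (by linarith) (by linarith : 0 < p)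
  have hDV : |D| ≤ Real.sqrt (2 * V * q) := Real.abs_le_sqrt (by nlinarith [sq_nonneg D])
  have hsplit :
      Real.sqrt (2 * V * q) + 2 * |m - 1| * q ≤ 2 * Real.sqrt ((V + (m - 1) ^ 2) * q) := by
    refine (pow_le_pow_iff_left₀ (by positivity) (by positivity) two_ne_zero).mp ?_
    have h2Vq := Real.sq_sqrt (by positivity : 0 ≤ 2 * V * q)
    have hε := Real.sq_sqrt (by positivity : 0 ≤ (V + (m - 1) ^ 2) * q)
    have hq2 : 0 ≤ 1 - 2 * q := by linarith
    calc (Real.sqrt (2 * V * q) + 2 * |m - 1| * q) ^ 2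
        ≤ 2 * Real.sqrt (2 * V * q) ^ 2 + 2 * (2 * |m - 1| * q) ^ 2 := by
          nlinarith [sq_nonneg (Real.sqrt (2 * V * q) - 2 * |m - 1| * q)]
      _ = 4 * V * q + 8 * (m - 1) ^ 2 * q ^ 2 := by rw [h2Vq, mul_pow, mul_pow, sq_abs]; ring
      _ ≤ (2 * Real.sqrt ((V + (m - 1) ^ 2) * q)) ^ 2 := by
          rw [mul_pow, hε]
          nlinarith [mul_nonneg (mul_nonneg (sq_nonneg (m - 1)) hq) hq2]
  nlinarith [le_abs_self (1 - m), abs_sub_comm m 1]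

/-- Conditioning lemma: if `Pr[E] ≥ 1/2` and `ε = E[(Z-1)²]`, then
`|E[Z] - E[Z | E]| ≤ 2(1 + E[Z])·Pr[Eᶜ] + 2√(ε·Pr[Eᶜ])`. -/
theorem conditioning_bound {Ω : Type*} [MeasurableSpace Ω] (μ : Measure Ω)
    [IsProbabilityMeasure μ] (Z : Ω → ℝ) (E : Set Ω) (hE : MeasurableSet E)
    (hZ1 : Integrable Z μ) (hZ2 : Integrable (fun ω => (Z ω - 1) ^ 2) μ)
    (hPrE : 1 / 2 ≤ (μ E).toReal) :
    |(∫ ω, Z ω ∂μ) - ((μ E).toReal)⁻¹ * ∫ ω in E, Z ω ∂μ|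
      ≤ 2 * (1 + ∫ ω, Z ω ∂μ) * (μ Eᶜ).toReal
        + 2 * Real.sqrt ((∫ ω, (Z ω - 1) ^ 2 ∂μ) * (μ Eᶜ).toReal) := by
  simp only [← measureReal_def] at hPrE ⊢
  set m := ∫ ω, Z ω ∂μ
  have hZ : MemLp Z 2 μ := by
    simpa [Pi.add_def] using
      ((memLp_two_iff_integrable_sq (by fun_prop)).2 hZ2).add (memLp_const 1)
  have hW : MemLp (fun ω ↦ Z ω - m) 2 μ := hZ.sub (memLp_const m)
  have hW0 : ∫ ω, (Z ω - m) ∂μ = 0 := by simp [integral_sub hZ1 (integrable_const m), m]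
  have hvar : ∫ ω, (Z ω - m) ^ 2 ∂μ = Var[Z; μ] := by
    rw [integral_sub_sq_eq_variance_add_sq hZ m]
    simp [m]
  have hcentered :
      μ.real E * (m - (μ.real E)⁻¹ * ∫ ω in E, Z ω ∂μ) = -∫ ω in E, (Z ω - m) ∂μ := by
    have hp : μ.real E ≠ 0 := by linarith
    rw [integral_sub hZ1.integrableOn (integrable_const m), setIntegral_const, smul_eq_mul]
    field_simp
    ring
  rw [integral_sub_sq_eq_variance_add_sq hZ 1]
  refine abs_le_conditioning_bound_of_sq_le (probReal_add_probReal_compl hE) hPrE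
    measureReal_nonneg (variance_nonneg _ _) ?_
  rw [hcentered, neg_sq, ← hvar]
  exact sq_setIntegral_le_of_integral_eq_zero hE (hW.integrable one_le_two) hW.integrable_sq hW0
end

section
/- Let S be a B×n CountSketch matrix and U ∈ R^{n×d} with orthonormal columns, M = U^T S^T S U. Then E_S[‖M − I‖_F^2] ≤ 2d^2/B. -/
open Matrix

/-- The CountSketch matrix determined by the row choices `r` and the sign choices `s`:
column `j` has its unique nonzero entry `±1` in row `r j`. -/
def countSketch (B n : ℕ) (r : Fin n → Fin B) (s : Fin n → Bool) :
    Matrix (Fin B) (Fin n) ℝ :=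
  Matrix.of fun i j => if r j = i then (if s j then 1 else -1) else 0

/-- The squared Frobenius norm of a real matrix. -/
def frobNormSq {d : ℕ} (A : Matrix (Fin d) (Fin d) ℝ) : ℝ :=
  ∑ i, ∑ j, (A i j) ^ 2

/-!
Write `SᵀS = 1 + P`, where `P a b = σ_a σ_b` if `a ≠ b` and columns `a, b` share a bucket, and
`0` otherwise. Then `M - 1 = Uᵀ P U`, so every entry of `M - 1` is a linear form
`∑ P a b x a b` with `x a b = U a i U b j`. The random signs make `E[P a b P a' b']` vanish unless
`{a', b'} = {a, b}`, and a fixed pair of distinct columns collides with probability `1 / B`, so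
`E (∑ P a b x a b)² = B⁻¹ ∑_{a ≠ b} x a b (x a b + x b a) ≤ 2 B⁻¹ ∑ x a b²`. Summed over `i, j`
the right side is `2 B⁻¹ (∑_a ‖U_a‖²)² = 2 d² / B`.

Sums over all `(r, s)` are unnormalised expectations; to avoid division, identities about them
are multiplied by the number of buckets.
-/

open Finset

def boolSign (x : Bool) : ℝ := if x then 1 else -1

@[simp] lemma boolSign_true : boolSign true = 1 := rfl
@[simp] lemma boolSign_false : boolSign false = -1 := rfl

lemma boolSign_not (x : Bool) : boolSign (!x) = -boolSign x := by cases x <;> simp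

lemma boolSign_mul_self (x : Bool) : boolSign x * boolSign x = 1 := by cases x <;> simp

lemma sum_mul_comp_equiv_le_sum_sq {α : Type*} [Fintype α] (f : α → ℝ) (e : α ≃ α) :
    ∑ i, f i * f (e i) ≤ ∑ i, f i ^ 2 :=
  calc ∑ i, f i * f (e i) ≤ ∑ i, (f i ^ 2 + f (e i) ^ 2) / 2 :=
        sum_le_sum fun i _ => by linarith [two_mul_le_add_sq (f i) (f (e i))]
    _ = ∑ i, f i ^ 2 := by
        rw [← sum_div, sum_add_distrib, Equiv.sum_comp e fun i => f i ^ 2]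
        ring

section Moments

variable {ι β : Type*} [Fintype ι] [DecidableEq ι] [Fintype β] [DecidableEq β]

lemma sum_boolSign_mul_eq_zero (i : ι) {g : (ι → Bool) → ℝ}
    (hg : ∀ s x, g (Function.update s i x) = g s) :
    ∑ s, boolSign (s i) * g s = 0 := by
  refine sum_ninvolution (fun s => Function.update s i (!s i)) (fun s => ?_) (fun s _ h => ?_)
    (fun _ => mem_univ _) (fun s => ?_)
  · simp [hg, boolSign_not]
  · simpa using congrFun h i
  · simp

lemma sum_boolSign_mul_four (a b a' b' : ι) (hab : a ≠ b) (hab' : a' ≠ b') :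
    ∑ s : ι → Bool, boolSign (s a) * boolSign (s b) * (boolSign (s a') * boolSign (s b')) =
      if (a' = a ∧ b' = b) ∨ (a' = b ∧ b' = a) then 2 ^ Fintype.card ι else 0 := by
  split_ifs with h
  · have hone : ∀ s : ι → Bool,
        boolSign (s a) * boolSign (s b) * (boolSign (s a') * boolSign (s b')) = 1 := by
      rcases h with ⟨rfl, rfl⟩ | ⟨rfl, rfl⟩ <;> intro s <;>
        linear_combination (boolSign (s a') * boolSign (s a')) * boolSign_mul_self (s b') +
          boolSign_mul_self (s a')
    simp [hone]
  -- an index occurring exactly once makes the sum vanish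
  by_cases ha : a' ≠ a ∧ b' ≠ a
  · simp_rw [mul_assoc]
    refine sum_boolSign_mul_eq_zero a fun s x => ?_
    simp [Function.update_of_ne hab.symm, Function.update_of_ne ha.1, Function.update_of_ne ha.2]
  simp only [not_and_or, not_not] at ha
  rcases ha with rfl | rfl
  · have hb : b' ≠ b := fun hb => h (Or.inl ⟨rfl, hb⟩)
    have : ∀ s : ι → Bool, boolSign (s a') * boolSign (s b) * (boolSign (s a') * boolSign (s b'))
        = boolSign (s b') * (boolSign (s a') * boolSign (s a') * boolSign (s b)) := fun s => by ring
    simp_rw [this]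
    refine sum_boolSign_mul_eq_zero b' fun s x => ?_
    simp [Function.update_of_ne hab', Function.update_of_ne hb.symm]
  · have hb : a' ≠ b := fun hb => h (Or.inr ⟨hb, rfl⟩)
    have : ∀ s : ι → Bool, boolSign (s b') * boolSign (s b) * (boolSign (s a') * boolSign (s b'))
        = boolSign (s a') * (boolSign (s b') * boolSign (s b') * boolSign (s b)) := fun s => by ring
    simp_rw [this]
    refine sum_boolSign_mul_eq_zero a' fun s x => ?_
    simp [Function.update_of_ne hab'.symm, Function.update_of_ne hb.symm]

lemma card_mul_sum_ite_apply_eq_apply (a b : ι) (hab : a ≠ b) :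
    (Fintype.card β : ℝ) * ∑ r : ι → β, (if r a = r b then 1 else 0) =
      (Fintype.card β : ℝ) ^ Fintype.card ι := by
  have hsplit (f : (ι → β) → ℝ) : ∑ r, f r = ∑ y, ∑ t, f ((Equiv.funSplitAt a β).symm (y, t)) := by
    rw [← Fintype.sum_prod_type']
    exact (Equiv.sum_comp _ f).symm
  have hfiber : ∀ t : {j // j ≠ a} → β,
      ∑ y, (if (Equiv.funSplitAt a β).symm (y, t) a = (Equiv.funSplitAt a β).symm (y, t) b
        then (1 : ℝ) else 0) = 1 := fun t => by
    simp [Equiv.funSplitAt, Equiv.piSplitAt, hab.symm]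
  calc (Fintype.card β : ℝ) * ∑ r : ι → β, (if r a = r b then 1 else 0)
      = ∑ _y : β, ∑ _t : {j // j ≠ a} → β, (1 : ℝ) := by
        rw [hsplit, sum_comm, sum_congr rfl fun t _ => hfiber t]
        simp
    _ = (Fintype.card β : ℝ) ^ Fintype.card ι := by
        rw [← hsplit fun _ => 1]
        simp

def collisionMatrix (r : ι → β) (s : ι → Bool) : Matrix ι ι ℝ :=
  Matrix.of fun a b => if a ≠ b ∧ r a = r b then boolSign (s a) * boolSign (s b) else 0

lemma card_mul_sum_sum_collisionMatrix_mul (p q : ι × ι) :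
    (Fintype.card β : ℝ) *
        ∑ r : ι → β, ∑ s : ι → Bool, collisionMatrix r s p.1 p.2 * collisionMatrix r s q.1 q.2 =
      if p.1 ≠ p.2 ∧ (q = p ∨ q = p.swap) then
        (Fintype.card β : ℝ) ^ Fintype.card ι * 2 ^ Fintype.card ι else 0 := by
  obtain ⟨a, b⟩ := p
  obtain ⟨a', b'⟩ := q
  by_cases hab : a = b
  · simp [collisionMatrix, hab]
  by_cases hab' : a' = b'
  · rw [if_neg]
    · simp [collisionMatrix, hab']
    · rintro ⟨-, h | h⟩ <;> simp only [Prod.mk.injEq, Prod.swap_prod_mk] at h <;>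
        exact hab (by rw [← h.1, ← h.2, hab'])
  have hsum : ∀ r : ι → β, ∑ s : ι → Bool,
      collisionMatrix r s a b * collisionMatrix r s a' b' =
        if r a = r b ∧ r a' = r b' then
          ∑ s : ι → Bool, boolSign (s a) * boolSign (s b) * (boolSign (s a') * boolSign (s b'))
        else 0 := fun r => by
    split_ifs with h
    · simp [collisionMatrix, hab, hab', h]
    · refine sum_eq_zero fun s _ => ?_
      simp only [collisionMatrix, Matrix.of_apply]
      split_ifs <;> simp_all
  simp_rw [hsum, sum_boolSign_mul_four a b a' b' hab hab']
  simp only [Prod.mk.injEq, Prod.swap_prod_mk, Ne, hab, not_false_eq_true, true_and]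
  split_ifs with hm
  · have hr : ∀ r : ι → β, r a = r b ∧ r a' = r b' ↔ r a = r b := fun r => by
      rcases hm with ⟨rfl, rfl⟩ | ⟨rfl, rfl⟩ <;> simp [eq_comm]
    simp_rw [hr, ← mul_boole _ (2 ^ Fintype.card ι : ℝ), ← mul_sum]
    rw [mul_left_comm, card_mul_sum_ite_apply_eq_apply a b hab, mul_comm]
  · simp

lemma card_mul_sum_sum_sq_eq_sum_sum (x : ι × ι → ℝ) :
    (Fintype.card β : ℝ) * ∑ r : ι → β, ∑ s : ι → Bool,
        (∑ p : ι × ι, collisionMatrix r s p.1 p.2 * x p) ^ 2 =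
      ∑ p : ι × ι, ∑ q : ι × ι, x p * x q *
        ((Fintype.card β : ℝ) * ∑ r : ι → β, ∑ s : ι → Bool,
          collisionMatrix r s p.1 p.2 * collisionMatrix r s q.1 q.2) := by
  simp_rw [sq, sum_mul_sum, mul_sum]
  -- move the sums over `r` and `s` innermost
  simp only [sum_comm (s := (univ : Finset (ι → β))) (t := univ (α := ι × ι)),
    sum_comm (s := (univ : Finset (ι → Bool))) (t := univ (α := ι × ι))]
  refine sum_congr rfl fun p _ => sum_congr rfl fun q _ => sum_congr rfl fun r _ =>
    sum_congr rfl fun s _ => by ring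

lemma sum_offDiag_mul_add_swap_le (x : ι × ι → ℝ) :
    ∑ p : ι × ι, (if p.1 ≠ p.2 then x p * (x p + x p.swap) else 0) ≤ 2 * ∑ p, x p ^ 2 := by
  have hswap := sum_mul_comp_equiv_le_sum_sq x (Equiv.prodComm ι ι)
  simp only [Equiv.coe_prodComm] at hswap
  calc ∑ p : ι × ι, (if p.1 ≠ p.2 then x p * (x p + x p.swap) else 0)
      ≤ ∑ p : ι × ι, x p * (x p + x p.swap) := by
        refine sum_le_sum fun p _ => ?_
        split_ifs with hp
        · exact le_rfl
        · obtain ⟨a, b⟩ := p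
          obtain rfl : a = b := not_not.1 hp
          simp only [Prod.swap_prod_mk]
          nlinarith [sq_nonneg (x (a, a))]
    _ ≤ 2 * ∑ p, x p ^ 2 := by
        simp only [mul_add, sum_add_distrib, ← sq]
        linarith

lemma card_mul_sum_sum_sq_eq_sum_offDiag (x : ι × ι → ℝ) :
    (Fintype.card β : ℝ) * ∑ r : ι → β, ∑ s : ι → Bool,
        (∑ p : ι × ι, collisionMatrix r s p.1 p.2 * x p) ^ 2 =
      (Fintype.card β : ℝ) ^ Fintype.card ι * 2 ^ Fintype.card ι *
        ∑ p : ι × ι, (if p.1 ≠ p.2 then x p * (x p + x p.swap) else 0) := by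
  rw [card_mul_sum_sum_sq_eq_sum_sum, mul_sum]
  refine sum_congr rfl fun p _ => ?_
  simp_rw [card_mul_sum_sum_collisionMatrix_mul]
  split_ifs with hp
  · have hswap : p ≠ p.swap := fun h => hp (congrArg Prod.snd h).symm
    rw [Fintype.sum_eq_add p p.swap hswap fun q hq => by simp [hq.1, hq.2]]
    simp [hp, hswap.symm]
    ring
  · simp [hp]

theorem card_mul_sum_sum_sq_le (x : ι × ι → ℝ) :
    (Fintype.card β : ℝ) * ∑ r : ι → β, ∑ s : ι → Bool,
        (∑ p : ι × ι, collisionMatrix r s p.1 p.2 * x p) ^ 2 ≤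
      2 * ((Fintype.card β : ℝ) ^ Fintype.card ι * 2 ^ Fintype.card ι) * ∑ p, x p ^ 2 := by
  have hK : (0 : ℝ) ≤ (Fintype.card β : ℝ) ^ Fintype.card ι * 2 ^ Fintype.card ι := by positivity
  rw [card_mul_sum_sum_sq_eq_sum_offDiag]
  linarith [mul_le_mul_of_nonneg_left (sum_offDiag_mul_add_swap_le x) hK]

end Moments

section Matrices

variable {m k : Type*} [Fintype m]

lemma transpose_mul_mul_apply (U : Matrix m k ℝ) (P : Matrix m m ℝ) (i j : k) :
    (Uᵀ * P * U) i j = ∑ p : m × m, P p.1 p.2 * (U p.1 i * U p.2 j) := by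
  simp only [mul_apply, transpose_apply, sum_mul, Fintype.sum_prod_type]
  rw [sum_comm]
  exact sum_congr rfl fun a _ => sum_congr rfl fun b _ => by ring

lemma sum_sum_sq_eq_trace_transpose_mul_self [Fintype k] (U : Matrix m k ℝ) :
    ∑ a, ∑ i, U a i ^ 2 = trace (Uᵀ * U) := by
  simp only [trace, Matrix.diag_apply, mul_apply, transpose_apply, sq]
  exact sum_comm

lemma sum_sum_sum_mul_sq [Fintype k] (U : Matrix m k ℝ) :
    ∑ i, ∑ j, ∑ p : m × m, (U p.1 i * U p.2 j) ^ 2 = (∑ a, ∑ i, U a i ^ 2) ^ 2 := by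
  conv_rhs => rw [sum_comm, sq, sum_mul_sum]
  simp_rw [sum_mul_sum, Fintype.sum_prod_type, mul_pow]

end Matrices

lemma countSketch_apply {B n : ℕ} (r : Fin n → Fin B) (s : Fin n → Bool) (i : Fin B) (j : Fin n) :
    countSketch B n r s i j = if r j = i then boolSign (s j) else 0 := rfl

lemma transpose_countSketch_mul_countSketch {B n : ℕ} (r : Fin n → Fin B) (s : Fin n → Bool) :
    (countSketch B n r s)ᵀ * countSketch B n r s = 1 + collisionMatrix r s := by
  ext a b
  have hentry : ((countSketch B n r s)ᵀ * countSketch B n r s) a b =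
      if r a = r b then boolSign (s a) * boolSign (s b) else 0 := by
    simp [mul_apply, countSketch_apply, ite_mul, eq_comm]
  rw [hentry]
  by_cases hab : a = b
  · simp [collisionMatrix, hab, boolSign_mul_self]
  · simp [collisionMatrix, hab]

/-- For a uniformly random CountSketch matrix `S` and `U` with orthonormal columns,
with `M = Uᵀ Sᵀ S U`, one has `E_S[‖M - I‖_F²] ≤ 2d²/B`. -/
theorem countSketch_expect_frob_sq_le (B n d : ℕ) (hB : 0 < B)
    (U : Matrix (Fin n) (Fin d) ℝ) (hU : Uᵀ * U = 1) :
    (∑ r : Fin n → Fin B, ∑ s : Fin n → Bool,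
        frobNormSq (Uᵀ * (countSketch B n r s)ᵀ * countSketch B n r s * U
          - (1 : Matrix (Fin d) (Fin d) ℝ)))
      / ((B : ℝ) ^ n * 2 ^ n) ≤ 2 * (d : ℝ) ^ 2 / B := by
  have hentry : ∀ r s, Uᵀ * (countSketch B n r s)ᵀ * countSketch B n r s * U - 1 =
      Uᵀ * collisionMatrix r s * U := fun r s => by
    rw [Matrix.mul_assoc Uᵀ, transpose_countSketch_mul_countSketch, Matrix.mul_add, Matrix.add_mul,
      Matrix.mul_one, hU, add_sub_cancel_left]
  have hrows : ∑ a, ∑ i, U a i ^ 2 = (d : ℝ) := by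
    simp [sum_sum_sq_eq_trace_transpose_mul_self, hU]
  have hbound : (B : ℝ) * ∑ r : Fin n → Fin B, ∑ s : Fin n → Bool,
        frobNormSq (Uᵀ * (countSketch B n r s)ᵀ * countSketch B n r s * U - 1) ≤
      2 * ((B : ℝ) ^ n * 2 ^ n) * d ^ 2 := by
    calc (B : ℝ) * ∑ r : Fin n → Fin B, ∑ s : Fin n → Bool,
          frobNormSq (Uᵀ * (countSketch B n r s)ᵀ * countSketch B n r s * U - 1)
        = ∑ i, ∑ j, (B : ℝ) * ∑ r : Fin n → Fin B, ∑ s : Fin n → Bool,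
            (∑ p : Fin n × Fin n, collisionMatrix r s p.1 p.2 * (U p.1 i * U p.2 j)) ^ 2 := by
          simp only [frobNormSq, hentry, transpose_mul_mul_apply, mul_sum]
          simp only [sum_comm (s := (univ : Finset (Fin n → Fin B))) (t := univ (α := Fin d)),
            sum_comm (s := (univ : Finset (Fin n → Bool))) (t := univ (α := Fin d))]
      _ ≤ ∑ i, ∑ j, 2 * ((B : ℝ) ^ n * 2 ^ n) * ∑ p : Fin n × Fin n, (U p.1 i * U p.2 j) ^ 2 := by
          refine sum_le_sum fun i _ => sum_le_sum fun j _ => ?_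
          simpa using card_mul_sum_sum_sq_le (β := Fin B) fun p => U p.1 i * U p.2 j
      _ = 2 * ((B : ℝ) ^ n * 2 ^ n) * d ^ 2 := by
          simp only [← mul_sum, sum_sum_sum_mul_sq, hrows]
  rw [div_le_div_iff₀ (by positivity) (by exact_mod_cast hB)]
  linarith
end

section
/- Suppose R ∈ R^{d×r} satisfies ‖V^T V − V^T R R^T V‖_2 ≤ ε for ε ∈ (0, 1/2], where V ∈ R^{d×ρ} has orthonormal columns (right singular vectors of X). Let Z_opt = max over 0 ≤ α ≤ C of 1^Tα − (1/2)α^T Y X X^T Y α and Z̃_opt the analogous optimum with X replaced by XR. Then (1 − ε)·Z_opt ≤ Z̃_opt and Z_opt ≥ (1 − ε/(1−ε))·Z̃_opt; consequently the SVM margins γ*, γ̃* with Z_opt = 1/(2γ*²), Z̃_opt = 1/(2γ̃*²) satisfy (1 − ε/(1−ε))·γ*² ≤ γ̃*² ≤ γ*²/(1 − ε). -/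
/-!
Both dual objectives are `∑ α − ½ ‖B α‖²` on the same box, with `B = XᵀY` resp. `RᵀXᵀY`.
Since `XᵀY α` lies in the column space of `V`, the hypothesis on `R` gives
`(1 − ε) ‖XᵀY α‖² ≤ ‖RᵀXᵀY α‖² ≤ (1 + ε) ‖XᵀY α‖²`. At an optimum `α*`, comparing with the
feasible points `t • α*`, `t ∈ [0, 1]`, shows `‖B α*‖² ≤ ∑ α*`, so the quadratic term is at most
the optimal value; evaluating the other objective at `α*` therefore loses at most `ε` (resp.
`ε / (1 − ε)`) times the optimum. The margin bounds are these inequalities read through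
`Z = 1 / (2 γ²)`.
-/

open Matrix
open scoped Matrix.Norms.L2Operator

namespace Matrix

variable {m n : Type*} [Fintype m] [Fintype n]

lemma dotProduct_mulVec_transpose_mul_self (A : Matrix m n ℝ) (x : n → ℝ) :
    x ⬝ᵥ (Aᵀ * A) *ᵥ x = (A *ᵥ x) ⬝ᵥ (A *ᵥ x) := by
  rw [← mulVec_mulVec, dotProduct_mulVec, ← mulVec_transpose, transpose_transpose]

lemma dotProduct_self_nonneg (x : n → ℝ) : 0 ≤ x ⬝ᵥ x :=
  Finset.sum_nonneg fun i _ => mul_self_nonneg (x i)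

lemma abs_dotProduct_mulVec_le_l2_opNorm [DecidableEq n] (E : Matrix n n ℝ) (x : n → ℝ) :
    |x ⬝ᵥ E *ᵥ x| ≤ ‖E‖ * (x ⬝ᵥ x) := by
  set x' := (EuclideanSpace.equiv n ℝ).symm x
  have hquad : x ⬝ᵥ E *ᵥ x = inner ℝ x' ((EuclideanSpace.equiv n ℝ).symm (E *ᵥ x)) := by
    rw [dotProduct_comm]; rfl
  have hsq : x ⬝ᵥ x = ‖x'‖ ^ 2 := by
    rw [← real_inner_self_eq_norm_sq]; rfl
  rw [hquad, hsq]
  calc _ ≤ ‖x'‖ * ‖(EuclideanSpace.equiv n ℝ).symm (E *ᵥ x)‖ := abs_real_inner_le_norm _ _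
    _ ≤ ‖x'‖ * (‖E‖ * ‖x'‖) := by gcongr; exact E.l2_opNorm_mulVec x'
    _ = ‖E‖ * ‖x'‖ ^ 2 := by ring

variable {d ρ r : Type*} [Fintype d] [Fintype ρ] [Fintype r] [DecidableEq ρ]

lemma abs_dotProduct_self_sub_transpose_mulVec_le {ε : ℝ} (V : Matrix d ρ ℝ) (R : Matrix d r ℝ)
    (hV : Vᵀ * V = 1) (hR : ‖Vᵀ * V - Vᵀ * R * Rᵀ * V‖ ≤ ε) (u : ρ → ℝ) :
    |(V *ᵥ u) ⬝ᵥ (V *ᵥ u) - (Rᵀ *ᵥ V *ᵥ u) ⬝ᵥ (Rᵀ *ᵥ V *ᵥ u)| ≤ ε * ((V *ᵥ u) ⬝ᵥ (V *ᵥ u)) := by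
  have hdiff : (V *ᵥ u) ⬝ᵥ (V *ᵥ u) - (Rᵀ *ᵥ V *ᵥ u) ⬝ᵥ (Rᵀ *ᵥ V *ᵥ u)
      = u ⬝ᵥ (Vᵀ * V - Vᵀ * R * Rᵀ * V) *ᵥ u := by
    rw [mulVec_mulVec, ← dotProduct_mulVec_transpose_mul_self,
      ← dotProduct_mulVec_transpose_mul_self, sub_mulVec, dotProduct_sub]
    simp only [transpose_mul, transpose_transpose, Matrix.mul_assoc]
  have hnorm : (V *ᵥ u) ⬝ᵥ (V *ᵥ u) = u ⬝ᵥ u := by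
    rw [← dotProduct_mulVec_transpose_mul_self, hV, one_mulVec]
  rw [hdiff, hnorm]
  exact (abs_dotProduct_mulVec_le_l2_opNorm _ u).trans
    (mul_le_mul_of_nonneg_right hR (dotProduct_self_nonneg u))

lemma gram_quadForm_mem_Icc {n : Type*} [Fintype n] {ε : ℝ} (V : Matrix d ρ ℝ)
    (R : Matrix d r ℝ) (B : Matrix d n ℝ) (hV : Vᵀ * V = 1)
    (hR : ‖Vᵀ * V - Vᵀ * R * Rᵀ * V‖ ≤ ε) (hB : V * Vᵀ * B = B) (α : n → ℝ) :
    α ⬝ᵥ ((Rᵀ * B)ᵀ * (Rᵀ * B)) *ᵥ α ∈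
      Set.Icc ((1 - ε) * (α ⬝ᵥ (Bᵀ * B) *ᵥ α)) ((1 + ε) * (α ⬝ᵥ (Bᵀ * B) *ᵥ α)) := by
  have hw : B *ᵥ α = V *ᵥ (Vᵀ *ᵥ (B *ᵥ α)) := by
    rw [mulVec_mulVec, mulVec_mulVec, hB]
  have hemb := abs_le.mp (abs_dotProduct_self_sub_transpose_mulVec_le V R hV hR (Vᵀ *ᵥ (B *ᵥ α)))
  rw [← hw] at hemb
  rw [dotProduct_mulVec_transpose_mul_self, dotProduct_mulVec_transpose_mul_self, ← mulVec_mulVec]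
  constructor <;> linarith [hemb.1, hemb.2]

end Matrix

section SVMDual

variable {n : Type*} [Fintype n]

noncomputable def svmDualObjective (K : Matrix n n ℝ) (α : n → ℝ) : ℝ :=
  (∑ i, α i) - (1 / 2) * (α ⬝ᵥ K *ᵥ α)

def svmDualValues (C : ℝ) (K : Matrix n n ℝ) : Set ℝ :=
  {z | ∃ α : n → ℝ, (∀ i, 0 ≤ α i ∧ α i ≤ C) ∧ z = svmDualObjective K α}

lemma le_of_forall_mem_Icc_scale_le {S Q : ℝ} (hS : 0 ≤ S)
    (h : ∀ t ∈ Set.Icc (0 : ℝ) 1, t * S - 1 / 2 * (t ^ 2 * Q) ≤ S - 1 / 2 * Q) : Q ≤ S := by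
  by_contra! hSQ
  have hQ : 0 < Q := hS.trans_lt hSQ
  have hval := h (S / Q) ⟨div_nonneg hS hQ.le, (div_lt_one hQ).mpr hSQ |>.le⟩
  have hvertex : S / Q * S - 1 / 2 * ((S / Q) ^ 2 * Q) = S ^ 2 / (2 * Q) := by
    field_simp; ring
  rw [hvertex, div_le_iff₀ (by positivity)] at hval
  nlinarith [sq_nonneg (S - Q)]

lemma exists_optimal_quadForm_le_sum {C Z : ℝ} {K : Matrix n n ℝ}
    (hZ : IsGreatest (svmDualValues C K) Z) :
    ∃ α : n → ℝ, (∀ i, 0 ≤ α i ∧ α i ≤ C) ∧ Z = svmDualObjective K α ∧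
      α ⬝ᵥ K *ᵥ α ≤ ∑ i, α i := by
  obtain ⟨⟨α, hα, rfl⟩, hmax⟩ := hZ
  refine ⟨α, hα, rfl, le_of_forall_mem_Icc_scale_le (Finset.sum_nonneg fun i _ => (hα i).1) ?_⟩
  rintro t ⟨ht0, ht1⟩
  have hfeas : ∀ i, 0 ≤ (t • α) i ∧ (t • α) i ≤ C := fun i =>
    ⟨mul_nonneg ht0 (hα i).1, (mul_le_of_le_one_left (hα i).1 ht1).trans (hα i).2⟩
  have hscaled : svmDualObjective K (t • α) = t * ∑ i, α i - 1 / 2 * (t ^ 2 * (α ⬝ᵥ K *ᵥ α)) := by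
    simp only [svmDualObjective, Pi.smul_apply, smul_eq_mul, ← Finset.mul_sum, mulVec_smul,
      dotProduct_smul, smul_dotProduct]
    ring
  exact hscaled ▸ hmax ⟨t • α, hfeas, rfl⟩

lemma one_sub_mul_le_of_quadForm_le {C c Z Z' : ℝ} {K K' : Matrix n n ℝ} (hc : 0 ≤ c)
    (hK : ∀ α, α ⬝ᵥ K' *ᵥ α ≤ (1 + c) * (α ⬝ᵥ K *ᵥ α))
    (hZ : IsGreatest (svmDualValues C K) Z) (hZ' : Z' ∈ upperBounds (svmDualValues C K')) :
    (1 - c) * Z ≤ Z' := by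
  obtain ⟨α, hα, rfl, hquad⟩ := exists_optimal_quadForm_le_sum hZ
  have hα' : svmDualObjective K' α ≤ Z' := hZ' ⟨α, hα, rfl⟩
  unfold svmDualObjective at hα' ⊢
  nlinarith [mul_le_mul_of_nonneg_left hquad hc, hK α]

end SVMDual

lemma mul_sq_le_sq_of_mul_one_div_le {a γ γ' : ℝ} (hγ : γ ≠ 0) (hγ' : γ' ≠ 0)
    (h : a * (1 / (2 * γ ^ 2)) ≤ 1 / (2 * γ' ^ 2)) : a * γ' ^ 2 ≤ γ ^ 2 := by
  rw [mul_one_div, div_le_div_iff₀ (by positivity) (by positivity)] at h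
  nlinarith [sq_pos_of_ne_zero hγ]

theorem svm_margin_preservation_general (N d r ρ : ℕ)
    (X : Matrix (Fin N) (Fin d) ℝ) (R : Matrix (Fin d) (Fin r) ℝ)
    (V : Matrix (Fin d) (Fin ρ) ℝ) (y : Fin N → ℝ)
    (C ε : ℝ) (hε0 : 0 < ε) (hε : ε ≤ 1 / 2)
    (hV : Vᵀ * V = 1) (hXV : X * V * Vᵀ = X)
    (hR : ‖Vᵀ * V - Vᵀ * R * Rᵀ * V‖ ≤ ε)
    (Zopt Ztopt : ℝ)
    (hZ : IsGreatest {z : ℝ | ∃ α : Fin N → ℝ, (∀ i, 0 ≤ α i ∧ α i ≤ C) ∧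
        z = (∑ i, α i) - (1 / 2) *
          (α ⬝ᵥ ((Matrix.diagonal y * X * Xᵀ * Matrix.diagonal y).mulVec α))} Zopt)
    (hZt : IsGreatest {z : ℝ | ∃ α : Fin N → ℝ, (∀ i, 0 ≤ α i ∧ α i ≤ C) ∧
        z = (∑ i, α i) - (1 / 2) *
          (α ⬝ᵥ ((Matrix.diagonal y * (X * R) * (X * R)ᵀ * Matrix.diagonal y).mulVec α))} Ztopt)
    (γ γt : ℝ) (hγ : 0 < γ) (hγt : 0 < γt)
    (hZγ : Zopt = 1 / (2 * γ ^ 2)) (hZtγ : Ztopt = 1 / (2 * γt ^ 2)) :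
    (1 - ε) * Zopt ≤ Ztopt ∧ (1 - ε / (1 - ε)) * Ztopt ≤ Zopt ∧
      (1 - ε / (1 - ε)) * γ ^ 2 ≤ γt ^ 2 ∧ γt ^ 2 ≤ γ ^ 2 / (1 - ε) := by
  have hε1 : 0 < 1 - ε := by linarith
  set B := Xᵀ * diagonal y
  have hK : diagonal y * X * Xᵀ * diagonal y = Bᵀ * B := by
    simp only [B, transpose_mul, transpose_transpose, diagonal_transpose, Matrix.mul_assoc]
  have hK' : diagonal y * (X * R) * (X * R)ᵀ * diagonal y = (Rᵀ * B)ᵀ * (Rᵀ * B) := by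
    simp only [B, transpose_mul, transpose_transpose, diagonal_transpose, Matrix.mul_assoc]
  have hB : V * Vᵀ * B = B := by
    show V * Vᵀ * (Xᵀ * diagonal y) = Xᵀ * diagonal y
    conv_rhs => rw [← hXV]
    simp only [transpose_mul, transpose_transpose, Matrix.mul_assoc]
  replace hZ : IsGreatest (svmDualValues C (Bᵀ * B)) Zopt := hK ▸ hZ
  replace hZt : IsGreatest (svmDualValues C ((Rᵀ * B)ᵀ * (Rᵀ * B))) Ztopt := hK' ▸ hZt
  have hsandwich := gram_quadForm_mem_Icc V R B hV hR hB
  have h1 : (1 - ε) * Zopt ≤ Ztopt :=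
    one_sub_mul_le_of_quadForm_le hε0.le (fun α => (hsandwich α).2) hZ hZt.2
  have h2 : (1 - ε / (1 - ε)) * Ztopt ≤ Zopt := by
    refine one_sub_mul_le_of_quadForm_le (by positivity) (fun α => ?_) hZt hZ.2
    rw [show 1 + ε / (1 - ε) = (1 - ε)⁻¹ by field_simp; ring, inv_mul_eq_div, le_div_iff₀ hε1,
      mul_comm]
    exact (hsandwich α).1
  refine ⟨h1, h2, mul_sq_le_sq_of_mul_one_div_le hγt.ne' hγ.ne' (hZtγ ▸ hZγ ▸ h2), ?_⟩
  rw [le_div_iff₀ hε1, mul_comm]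
  exact mul_sq_le_sq_of_mul_one_div_le hγ.ne' hγt.ne' (hZγ ▸ hZtγ ▸ h1)

/-- SVM margin preservation under projection: if `‖VᵀV − VᵀRRᵀV‖₂ ≤ ε` with `ε ∈ (0, 1/2]`,
`V` the orthonormal right singular vectors of the data matrix `X` (so `XVVᵀ = X`), and
`Z_opt`, `Z̃_opt` are the optima of the dual SVM objectives for `X` and `XR`, then
`(1 − ε)·Z_opt ≤ Z̃_opt` and `Z_opt ≥ (1 − ε/(1−ε))·Z̃_opt`; consequently the margins
`γ*, γ̃*` with `Z_opt = 1/(2γ*²)`, `Z̃_opt = 1/(2γ̃*²)` satisfy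
`(1 − ε/(1−ε))·γ*² ≤ γ̃*²` and `γ̃*² ≤ γ*²/(1 − ε)`. -/
theorem svm_margin_preservation (N d r ρ : ℕ)
    (X : Matrix (Fin N) (Fin d) ℝ) (R : Matrix (Fin d) (Fin r) ℝ)
    (V : Matrix (Fin d) (Fin ρ) ℝ) (y : Fin N → ℝ)
    (hy : ∀ i, y i = 1 ∨ y i = -1)
    (C ε : ℝ) (hε0 : 0 < ε) (hε : ε ≤ 1 / 2)
    (hV : Vᵀ * V = 1) (hXV : X * V * Vᵀ = X)
    (hR : ‖Vᵀ * V - Vᵀ * R * Rᵀ * V‖ ≤ ε)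
    (Zopt Ztopt : ℝ)
    (hZ : IsGreatest {z : ℝ | ∃ α : Fin N → ℝ, (∀ i, 0 ≤ α i ∧ α i ≤ C) ∧
        z = (∑ i, α i) - (1 / 2) *
          (α ⬝ᵥ ((Matrix.diagonal y * X * Xᵀ * Matrix.diagonal y).mulVec α))} Zopt)
    (hZt : IsGreatest {z : ℝ | ∃ α : Fin N → ℝ, (∀ i, 0 ≤ α i ∧ α i ≤ C) ∧
        z = (∑ i, α i) - (1 / 2) *
          (α ⬝ᵥ ((Matrix.diagonal y * (X * R) * (X * R)ᵀ * Matrix.diagonal y).mulVec α))} Ztopt)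
    (γ γt : ℝ) (hγ : 0 < γ) (hγt : 0 < γt)
    (hZγ : Zopt = 1 / (2 * γ ^ 2)) (hZtγ : Ztopt = 1 / (2 * γt ^ 2)) :
    (1 - ε) * Zopt ≤ Ztopt ∧ (1 - ε / (1 - ε)) * Ztopt ≤ Zopt ∧
      (1 - ε / (1 - ε)) * γ ^ 2 ≤ γt ^ 2 ∧ γt ^ 2 ≤ γ ^ 2 / (1 - ε) :=
  svm_margin_preservation_general N d r ρ X R V y C ε hε0 hε hV hXV hR Zopt Ztopt hZ hZt γ γt hγ hγt
    hZγ hZtγ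
end
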